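/- Let w be in the type D_n Weyl group (as signed permutations of {1,…,2n}), λ = λ(w) the associated partition, p = p(w), and λ' the conjugate partition of λ. Then λ'_k = λ_k + 1 for 1 ≤ k ≤ p, λ_{p+1} = p, and λ'_k = λ_{k+1} for p+1 ≤ k ≤ n-1. -/

import Mathlib

open Finset

def Wcond (n : ℕ) (w : Equiv.Perm (Fin (2*n))) : Prop :=
  ∀ i : Fin (2*n), ((w i : ℕ) + 1) + ((w i.rev : ℕ) + 1) = 2*n + 1

def Wpar (n : ℕ) (w : Equiv.Perm (Fin (2*n))) : Prop :=
  Even ((Finset.univ.filter (fun i : Fin (2*n) => (i : ℕ) < n ∧ n ≤ (w i : ℕ))).card)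

noncomputable def jjf (n : ℕ) (w : Equiv.Perm (Fin (2*n))) (k : ℕ) : ℕ :=
  ((((Finset.univ.filter (fun i : Fin (2*n) => (i : ℕ) < n)).image w).sort (· ≤ ·)).map
    (fun x => (x : ℕ) + 1)).getD (k-1) 0

noncomputable def lamf (n : ℕ) (w : Equiv.Perm (Fin (2*n))) (k : ℕ) : ℤ :=
  if jjf n w (n+1-k) ≤ n then (jjf n w (n+1-k) : ℤ) - ((n+1-k : ℕ) : ℤ)
  else (jjf n w (n+1-k) : ℤ) - ((n+1-k : ℕ) : ℤ) - 1

noncomputable def pval (n : ℕ) (w : Equiv.Perm (Fin (2*n))) : ℕ :=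
  ((Finset.Icc 1 n).filter (fun k => n+2 ≤ jjf n w k)).card

noncomputable def lamconj (n : ℕ) (w : Equiv.Perm (Fin (2*n))) (k : ℕ) : ℤ :=
  (((Finset.Icc 1 n).filter (fun i => (k:ℤ) ≤ lamf n w i)).card : ℤ)

/-!
Put `S = J(w) - 1 ⊆ [0, 2n)`. The reflection `b ↦ 2n - 1 - b` exchanges `S` with its complement,
so exactly one middle point `a₀ ∈ {n - 1, n}` lies in `S`; let `b₀` be its mirror. Then `λ_k` is
the number of non-elements of `S` other than `b₀` below the `k`-th largest element of `S`, and
`p` is the number of elements of `S` above `a₀`. Conjugating swaps "non-elements below an element"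
with "elements above a non-element", and the reflection maps `S \ {a₀}` onto the complement minus
`b₀`. Hence `λ'_k` is the number of non-elements of `S` below the `k`-th largest element of
`S \ {a₀}`, which is the `k`-th largest element of `S` for `k ≤ p` and the `(k+1)`-st for `k > p`;
and `λ_{p+1}` is read off at `a₀`, the `(p+1)`-st largest element of `S`.
-/

theorem Nat.count_add_count_not (p : ℕ → Prop) [DecidablePred p] (x : ℕ) :
    Nat.count p x + Nat.count (fun b => ¬ p b) x = x := by
  rw [Nat.count_eq_card_filter_range, Nat.count_eq_card_filter_range,
    card_filter_add_card_filter_not, card_range]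

theorem Nat.count_succ_le_count_iff {p : ℕ → Prop} [DecidablePred p] {y : ℕ} (hy : p y)
    {x : ℕ} : Nat.count p (y + 1) ≤ Nat.count p x ↔ y < x := by
  refine ⟨fun h => ?_, fun h => Nat.count_monotone p h⟩
  by_contra! hxy
  exact (Nat.count_lt_count_succ_iff.mpr hy).not_ge (h.trans (Nat.count_monotone p hxy))

open Nat

namespace Finset

variable {S : Finset ℕ} {m : ℕ}

theorem nth_mem_eq_getD_sort (m : ℕ) : nth (· ∈ S) m = S.sort.getD m 0 := by
  rw [Nat.nth_eq_getD_sort (p := (· ∈ S)) S.finite_toSet, S.finite_toSet_toFinset]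

theorem nth_mem_mem_of_lt_card (hm : m < #S) : nth (· ∈ S) m ∈ S :=
  Nat.nth_mem_of_lt_card S.finite_toSet (by rwa [S.finite_toSet_toFinset])

theorem count_nth_of_lt_card (hm : m < #S) : count (· ∈ S) (nth (· ∈ S) m) = m :=
  count_nth_of_lt_card_finite S.finite_toSet (by rwa [S.finite_toSet_toFinset])

theorem count_mem_eq_card_filter_lt (S : Finset ℕ) (x : ℕ) :
    count (· ∈ S) x = #{c ∈ S | c < x} := by
  rw [count_eq_card_filter_range]
  congr 1
  ext c
  simp [and_comm]

theorem count_mem_le_card (x : ℕ) : count (· ∈ S) x ≤ #S := by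
  rw [count_mem_eq_card_filter_lt]
  exact card_filter_le _ _

theorem le_nth_iff_count_le (hm : m < #S) {x : ℕ} : x ≤ nth (· ∈ S) m ↔ count (· ∈ S) x ≤ m := by
  refine ⟨le_nth_of_count_le, fun h => ?_⟩
  by_contra! hlt
  have := (count_succ_le_count_iff (nth_mem_mem_of_lt_card hm)).mpr hlt
  rw [count_succ, count_nth_of_lt_card hm, if_pos (nth_mem_mem_of_lt_card hm)] at this
  exact absurd (this.trans h) (by omega)

theorem count_notMem_nth_add (hm : m < #S) :
    count (· ∉ S) (nth (· ∈ S) m) + m = nth (· ∈ S) m := by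
  have := count_add_count_not (· ∈ S) (nth (· ∈ S) m)
  rw [count_nth_of_lt_card hm] at this
  omega

theorem card_filter_nth_le (hm : m < #S) : #{c ∈ S | nth (· ∈ S) m ≤ c} = #S - m := by
  have := card_filter_add_card_filter_not (s := S) (fun c => nth (· ∈ S) m ≤ c)
  simp only [not_le, ← count_mem_eq_card_filter_lt, count_nth_of_lt_card hm] at this
  omega

theorem card_Icc_filter_nth_sub {N : ℕ} (hN : #S = N) (P : ℕ → Prop) [DecidablePred P] :
    #{i ∈ Icc 1 N | P (nth (· ∈ S) (N - i))} = #{x ∈ S | P x} := by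
  subst hN
  have hlt : ∀ x ∈ S, count (· ∈ S) x < #S := fun x hx => by
    simpa [S.finite_toSet_toFinset] using count_lt_card S.finite_toSet hx
  refine card_nbij' (fun i => nth (· ∈ S) (#S - i)) (fun x => #S - count (· ∈ S) x)
    (fun i hi => ?_) (fun x hx => ?_) (fun i hi => ?_) (fun x hx => ?_)
  all_goals simp only [coe_filter, mem_Icc, Set.mem_ofPred_eq] at *
  · exact ⟨nth_mem_mem_of_lt_card (by omega), hi.2⟩
  · have := hlt x hx.1
    rw [Nat.sub_sub_self this.le, nth_count hx.1]
    exact ⟨⟨by omega, by omega⟩, hx.2⟩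
  · rw [count_nth_of_lt_card (by omega)]
    omega
  · rw [Nat.sub_sub_self (hlt x hx.1).le, nth_count hx.1]

end Finset

structure IsSelfComplementary (n : ℕ) (S : Finset ℕ) : Prop where
  lt_two_mul : ∀ a ∈ S, a < 2 * n
  reflect_mem_iff : ∀ b < 2 * n, 2 * n - 1 - b ∈ S ↔ b ∉ S

namespace IsSelfComplementary

variable {n : ℕ} {S : Finset ℕ}

theorem card_filter_le_and_eq_count (hS : IsSelfComplementary n S) (P : ℕ → Prop)
    [DecidablePred P] {a : ℕ} (ha : a ≤ 2 * n) :
    #{c ∈ S | a ≤ c ∧ P c} = count (fun b => b ∉ S ∧ P (2 * n - 1 - b)) (2 * n - a) := by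
  rw [count_eq_card_filter_range]
  refine card_nbij' (fun c => 2 * n - 1 - c) (fun b => 2 * n - 1 - b)
    (fun c hc => ?_) (fun b hb => ?_) (fun c hc => ?_) (fun b hb => ?_)
  all_goals simp only [coe_filter, mem_range, Set.mem_ofPred_eq] at *
  · have := hS.lt_two_mul c hc.1
    rw [hS.reflect_mem_iff _ (by omega), show 2 * n - 1 - (2 * n - 1 - c) = c by omega]
    exact ⟨by omega, not_not.mpr hc.1, hc.2.2⟩
  · exact ⟨(hS.reflect_mem_iff b (by omega)).mpr hb.2.1, by omega, hb.2.2⟩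
  · have := hS.lt_two_mul c hc.1
    omega
  · omega

theorem card_eq (hS : IsSelfComplementary n S) : #S = n := by
  have hrefl := hS.card_filter_le_and_eq_count (fun _ => True) (Nat.zero_le _)
  have hall : count (· ∈ S) (2 * n) = #S := by
    rw [count_mem_eq_card_filter_lt, filter_true_of_mem hS.lt_two_mul]
  have := count_add_count_not (· ∈ S) (2 * n)
  simp only [zero_le, filter_true, and_true, Nat.sub_zero] at hrefl
  omega

theorem sub_one_mem_iff_notMem (hS : IsSelfComplementary n S) (hn : 1 ≤ n) :
    n - 1 ∈ S ↔ n ∉ S := by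
  have := hS.reflect_mem_iff n (by omega)
  rwa [show 2 * n - 1 - n = n - 1 by omega] at this

theorem exists_mem_middle (hS : IsSelfComplementary n S) (hn : 1 ≤ n) :
    ∃ a₀ ∈ S, n - 1 ≤ a₀ ∧ a₀ ≤ n := by
  by_cases h : n ∈ S
  · exact ⟨n, h, by omega, le_rfl⟩
  · exact ⟨n - 1, (hS.sub_one_mem_iff_notMem hn).mpr h, le_rfl, by omega⟩

theorem count_succ_eq_count_pred_add_one (hS : IsSelfComplementary n S) (hn : 1 ≤ n) :
    count (· ∈ S) (n + 1) = count (· ∈ S) (n - 1) + 1 := by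
  have h := hS.sub_one_mem_iff_notMem hn
  obtain ⟨k, rfl⟩ : ∃ k, n = k + 1 := ⟨n - 1, by omega⟩
  simp only [Nat.add_sub_cancel] at h ⊢
  rw [count_succ, count_succ]
  by_cases hk : k ∈ S <;> simp_all

/- The reflection turns `#{c ∈ S | a ≤ c ∧ c ≠ a₀}` into the count on the right evaluated at
`2n - a`, so the condition on `x` says exactly `2n - 1 - a < x`; reflecting once more counts those `x`. -/
theorem card_filter_card_le_count_eq (hS : IsSelfComplementary n S) {a a₀ : ℕ} (ha : a ∈ S)
    (hne : a ≠ a₀) :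
    #{x ∈ S | #{c ∈ S | a ≤ c ∧ c ≠ a₀} ≤ count (fun b => b ∉ S ∧ 2 * n - 1 - b ≠ a₀) x}
      = count (· ∉ S) a := by
  have ha2 := hS.lt_two_mul a ha
  have hy : 2 * n - 1 - a ∉ S ∧ 2 * n - 1 - (2 * n - 1 - a) ≠ a₀ := by
    rw [← hS.reflect_mem_iff _ (by omega), show 2 * n - 1 - (2 * n - 1 - a) = a by omega]
    exact ⟨ha, hne⟩
  have hupper := hS.card_filter_le_and_eq_count (fun _ => True) (a := 2 * n - a) (by omega)
  simp only [and_true, show 2 * n - (2 * n - a) = a by omega] at hupper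
  rw [hS.card_filter_le_and_eq_count (· ≠ a₀) ha2.le,
    show 2 * n - a = 2 * n - 1 - a + 1 by omega, ← hupper]
  congr 1
  refine filter_congr fun x _ => ?_
  rw [count_succ_le_count_iff hy]
  omega

theorem count_reflect_ne_add_ite (hS : IsSelfComplementary n S) {a₀ : ℕ} (ha₀ : a₀ ∈ S)
    (h₁ : n - 1 ≤ a₀) (h₂ : a₀ ≤ n) {x : ℕ} (hx : x ∈ S) :
    count (fun b => b ∉ S ∧ 2 * n - 1 - b ≠ a₀) x + (if n ≤ x then 1 else 0)
      = count (· ∉ S) x := by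
  have hx2 := hS.lt_two_mul x hx
  have hb₀ : 2 * n - 1 - a₀ ∉ S := by
    rw [← hS.reflect_mem_iff _ (by omega), show 2 * n - 1 - (2 * n - 1 - a₀) = a₀ by omega]
    exact ha₀
  have hxb : x ≠ 2 * n - 1 - a₀ := fun h => hb₀ (h ▸ hx)
  have herase : (range x).filter (fun b => b ∉ S ∧ 2 * n - 1 - b ≠ a₀)
      = ((range x).filter (· ∉ S)).erase (2 * n - 1 - a₀) := by
    ext b
    simp only [mem_filter, mem_range, mem_erase]
    constructor
    · rintro ⟨hb, hbS, hba⟩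
      exact ⟨by omega, hb, hbS⟩
    · rintro ⟨hba, hb, hbS⟩
      exact ⟨hb, hbS, by omega⟩
  rw [count_eq_card_filter_range, count_eq_card_filter_range, herase]
  split_ifs with h
  · have hmem : 2 * n - 1 - a₀ ∈ (range x).filter (· ∉ S) := by
      simp only [mem_filter, mem_range]
      exact ⟨by omega, hb₀⟩
    rw [card_erase_of_mem hmem]
    have := card_pos.mpr ⟨_, hmem⟩
    omega
  · rw [erase_eq_of_notMem (by simp only [mem_filter, mem_range]; omega), add_zero]

end IsSelfComplementary

/-- `λ_k`, for `S = J(w) - 1`: the `(n - k)`-th element `a` of `S` (counting from `0`) is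
`j_{n+1-k} - 1`, and `count (· ∉ S) a = a - (n - k)`. -/
noncomputable def partLambda (S : Finset ℕ) (n k : ℕ) : ℤ :=
  count (· ∉ S) (nth (· ∈ S) (n - k)) - if n ≤ nth (· ∈ S) (n - k) then 1 else 0

namespace IsSelfComplementary

variable {n : ℕ} {S : Finset ℕ}

theorem card_Icc_filter_le_partLambda (hS : IsSelfComplementary n S) {a₀ : ℕ} (ha₀ : a₀ ∈ S)
    (h₁ : n - 1 ≤ a₀) (h₂ : a₀ ≤ n) (j : ℕ) :
    #{i ∈ Icc 1 n | (j : ℤ) ≤ partLambda S n i}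
      = #{x ∈ S | j ≤ count (fun b => b ∉ S ∧ 2 * n - 1 - b ≠ a₀) x} := by
  refine (card_Icc_filter_nth_sub hS.card_eq
    (fun x => (j : ℤ) ≤ count (· ∉ S) x - if n ≤ x then 1 else 0)).trans ?_
  refine congrArg card (filter_congr fun x hx => ?_)
  have := hS.count_reflect_ne_add_ite ha₀ h₁ h₂ hx
  split_ifs at this ⊢ <;> omega

theorem card_Icc_filter_le_partLambda_of_le (hS : IsSelfComplementary n S) (hn : 1 ≤ n)
    {j : ℕ} (hj : 1 ≤ j) (hjp : j ≤ n - count (· ∈ S) (n + 1)) :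
    #{i ∈ Icc 1 n | (j : ℤ) ≤ partLambda S n i} = partLambda S n j + 1 := by
  obtain ⟨a₀, ha₀, h₁, h₂⟩ := hS.exists_mem_middle hn
  have hm : n - j < #S := by rw [hS.card_eq]; omega
  set a := nth (· ∈ S) (n - j)
  have ha : a ∈ S := nth_mem_mem_of_lt_card hm
  have hna : n + 1 ≤ a := (le_nth_iff_count_le hm).mpr (by omega)
  have hrank : #{c ∈ S | a ≤ c ∧ c ≠ a₀} = j := by
    rw [filter_congr fun c _ => and_iff_left_of_imp fun h => by omega,
      card_filter_nth_le hm, hS.card_eq]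
    omega
  have hconj := hS.card_filter_card_le_count_eq ha (by omega : a ≠ a₀)
  rw [hrank] at hconj
  rw [hS.card_Icc_filter_le_partLambda ha₀ h₁ h₂, hconj, partLambda, if_pos (by omega)]
  ring

theorem partLambda_sub_count_add_one (hS : IsSelfComplementary n S) (hn : 1 ≤ n) :
    partLambda S n (n - count (· ∈ S) (n + 1) + 1) = ((n - count (· ∈ S) (n + 1) : ℕ) : ℤ) := by
  have hmid := hS.count_succ_eq_count_pred_add_one hn
  have hle : count (· ∈ S) (n + 1) ≤ n := hS.card_eq ▸ count_mem_le_card _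
  have hm : count (· ∈ S) (n - 1) < #S := by rw [hS.card_eq]; omega
  have h₁ : n - 1 ≤ nth (· ∈ S) (count (· ∈ S) (n - 1)) := (le_nth_iff_count_le hm).mpr le_rfl
  have h₂ : ¬ n + 1 ≤ nth (· ∈ S) (count (· ∈ S) (n - 1)) := by
    rw [le_nth_iff_count_le hm]
    omega
  have := count_notMem_nth_add hm
  rw [partLambda, show n - (n - count (· ∈ S) (n + 1) + 1) = count (· ∈ S) (n - 1) by omega]
  split_ifs <;> omega

theorem card_Icc_filter_le_partLambda_of_lt (hS : IsSelfComplementary n S) (hn : 1 ≤ n)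
    {j : ℕ} (hpj : n - count (· ∈ S) (n + 1) + 1 ≤ j) (hj : j ≤ n - 1) :
    #{i ∈ Icc 1 n | (j : ℤ) ≤ partLambda S n i} = partLambda S n (j + 1) := by
  obtain ⟨a₀, ha₀, h₁, h₂⟩ := hS.exists_mem_middle hn
  have hmid := hS.count_succ_eq_count_pred_add_one hn
  have hm : n - (j + 1) < #S := by rw [hS.card_eq]; omega
  set a := nth (· ∈ S) (n - (j + 1))
  have ha : a ∈ S := nth_mem_mem_of_lt_card hm
  have han : a < n - 1 := not_le.mp <| by rw [le_nth_iff_count_le hm]; omega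
  have hrank : #{c ∈ S | a ≤ c ∧ c ≠ a₀} = j := by
    rw [← filter_filter, filter_ne', card_erase_of_mem (mem_filter.mpr ⟨ha₀, by omega⟩),
      card_filter_nth_le hm, hS.card_eq]
    omega
  have hconj := hS.card_filter_card_le_count_eq ha (by omega : a ≠ a₀)
  rw [hrank] at hconj
  rw [hS.card_Icc_filter_le_partLambda ha₀ h₁ h₂, hconj, partLambda, if_neg (by omega), sub_zero]

end IsSelfComplementary

theorem Wcond.apply_rev {n : ℕ} {w : Equiv.Perm (Fin (2 * n))} (hw : Wcond n w)
    (i : Fin (2 * n)) : w i.rev = (w i).rev := by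
  have := hw i
  ext
  rw [Fin.val_rev]
  omega

/-- `J(w)`, shifted down by one to lie in `[0, 2n)`. -/
def jSet (n : ℕ) (w : Equiv.Perm (Fin (2 * n))) : Finset ℕ :=
  ((univ.filter (fun i : Fin (2 * n) => (i : ℕ) < n)).image w).map Fin.valEmbedding

section jSet

variable {n : ℕ} {w : Equiv.Perm (Fin (2 * n))}

theorem val_mem_jSet_iff (x : Fin (2 * n)) : (x : ℕ) ∈ jSet n w ↔ (w.symm x : ℕ) < n := by
  simp only [jSet, mem_map, mem_image, mem_filter, mem_univ, true_and, Fin.valEmbedding_apply]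
  constructor
  · rintro ⟨y, ⟨i, hi, rfl⟩, hy⟩
    rwa [← Fin.ext hy, w.symm_apply_apply]
  · intro h
    exact ⟨x, ⟨w.symm x, h, w.apply_symm_apply x⟩, rfl⟩

theorem isSelfComplementary_jSet (hw : Wcond n w) : IsSelfComplementary n (jSet n w) where
  lt_two_mul a ha := by
    obtain ⟨x, -, rfl⟩ := mem_map.mp ha
    exact x.isLt
  reflect_mem_iff b hb := by
    have hsymm : w.symm (Fin.mk b hb).rev = (w.symm ⟨b, hb⟩).rev := by
      rw [Equiv.symm_apply_eq, hw.apply_rev, Equiv.apply_symm_apply]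
    have hrev := val_mem_jSet_iff (w := w) (Fin.mk b hb).rev
    rw [Fin.val_rev, hsymm, Fin.val_rev] at hrev
    rw [show 2 * n - 1 - b = 2 * n - (b + 1) by omega, hrev, val_mem_jSet_iff (w := w) ⟨b, hb⟩]
    omega

theorem jjf_eq_nth_add_one (hw : Wcond n w) {k : ℕ} (hk : 1 ≤ k) (hkn : k ≤ n) :
    jjf n w k = nth (· ∈ jSet n w) (k - 1) + 1 := by
  have hcard := (isSelfComplementary_jSet hw).card_eq
  have hsort : (jSet n w).sort
      = ((univ.filter (fun i : Fin (2 * n) => (i : ℕ) < n)).image w).sort.map Fin.val :=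
    (Fin.val_strictMono.strictMonoOn _).map_finsetSort.symm
  have hlen :
      k - 1 < ((univ.filter (fun i : Fin (2 * n) => (i : ℕ) < n)).image w).sort.length := by
    rw [length_sort, ← card_map Fin.valEmbedding]
    change k - 1 < #(jSet n w)
    omega
  rw [nth_mem_eq_getD_sort, hsort, jjf, List.getD_eq_getElem _ _ (by simpa using hlen),
    List.getD_eq_getElem _ _ (by simpa using hlen)]
  simp [← List.map_eq_flatMap]

theorem lamf_eq_partLambda (hw : Wcond n w) {k : ℕ} (hk : 1 ≤ k) (hkn : k ≤ n) :
    lamf n w k = partLambda (jSet n w) n k := by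
  have hm : n - k < #(jSet n w) := by rw [(isSelfComplementary_jSet hw).card_eq]; omega
  have := count_notMem_nth_add hm
  rw [lamf, partLambda, jjf_eq_nth_add_one hw (by omega) (by omega),
    show n + 1 - k - 1 = n - k by omega]
  split_ifs <;> omega

theorem lamconj_eq_card (hw : Wcond n w) (j : ℕ) :
    lamconj n w j = #{i ∈ Icc 1 n | (j : ℤ) ≤ partLambda (jSet n w) n i} := by
  rw [lamconj]
  congr 2
  refine filter_congr fun i hi => ?_
  rw [mem_Icc] at hi
  rw [lamf_eq_partLambda hw hi.1 hi.2]

theorem pval_eq (hw : Wcond n w) : pval n w = n - count (· ∈ jSet n w) (n + 1) := by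
  have hcard := (isSelfComplementary_jSet hw).card_eq
  have hfilter : (Icc 1 n).filter (fun k => n + 2 ≤ jjf n w k)
      = Icc (count (· ∈ jSet n w) (n + 1) + 1) n := by
    ext k
    simp only [mem_filter, mem_Icc]
    constructor
    · rintro ⟨⟨hk, hkn⟩, hj⟩
      rw [jjf_eq_nth_add_one hw hk hkn] at hj
      have := (le_nth_iff_count_le (by omega)).mp (by omega : n + 1 ≤ nth (· ∈ jSet n w) (k - 1))
      omega
    · rintro ⟨hk, hkn⟩
      refine ⟨⟨by omega, hkn⟩, ?_⟩
      rw [jjf_eq_nth_add_one hw (by omega) hkn]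
      have := (le_nth_iff_count_le (S := jSet n w) (m := k - 1) (by omega) (x := n + 1)).mpr
        (by omega)
      omega
  rw [pval, hfilter, Nat.card_Icc]
  omega

end jSet

theorem stmt10_general (n : ℕ) (hn : 1 ≤ n) (w : Equiv.Perm (Fin (2*n)))
    (hw : Wcond n w) :
    (∀ k, 1 ≤ k → k ≤ pval n w → lamconj n w k = lamf n w k + 1) ∧
    lamf n w (pval n w + 1) = (pval n w : ℤ) ∧
    (∀ k, pval n w + 1 ≤ k → k ≤ n - 1 → lamconj n w k = lamf n w (k+1)) := by
  have hS := isSelfComplementary_jSet hw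
  have hp : 1 ≤ Nat.count (· ∈ jSet n w) (n + 1) := by
    have := hS.count_succ_eq_count_pred_add_one hn
    omega
  rw [pval_eq hw]
  refine ⟨fun j hj hjp => ?_, ?_, fun j hpj hjn => ?_⟩
  · rw [lamconj_eq_card hw, lamf_eq_partLambda hw hj (by omega),
      hS.card_Icc_filter_le_partLambda_of_le hn hj hjp]
  · rw [lamf_eq_partLambda hw (by omega) (by omega), hS.partLambda_sub_count_add_one hn]
  · rw [lamconj_eq_card hw, lamf_eq_partLambda hw (by omega) (by omega),
      hS.card_Icc_filter_le_partLambda_of_lt hn hpj hjn]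

theorem stmt10 (n : ℕ) (hn : 1 ≤ n) (w : Equiv.Perm (Fin (2*n)))
    (hw : Wcond n w) (hpar : Wpar n w) :
    (∀ k, 1 ≤ k → k ≤ pval n w → lamconj n w k = lamf n w k + 1) ∧
    lamf n w (pval n w + 1) = (pval n w : ℤ) ∧
    (∀ k, pval n w + 1 ≤ k → k ≤ n - 1 → lamconj n w k = lamf n w (k+1)) :=
  stmt10_general n hn w hw
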